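/- arXiv:1403.0505 — 7 statements merged into one kernel-verified Lean document; each statement's English description precedes it below -/
import Mathlib

section
/- For any nonnegative vectors p, q ∈ ℝ_+^n, the fidelity F(p,q) = (∑_i √(p_i q_i))² equals the optimal value of the semidefinite program: maximize ⟨X, √p √p^T⟩ subject to diag(X) = q and X positive semidefinite. -/
open Real Finset

/- The upper bound is entrywise: a positive semidefinite `X` with diagonal `q` satisfies
`X i j ≤ √(q i) √(q j)` because its `2 × 2` principal minors are nonnegative, and the weights
`√(p i) √(p j)` are nonnegative. The rank-one matrix `√q √qᵀ` attains the bound. -/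

theorem Matrix.PosSemidef.apply_le_sqrt_mul_sqrt {n : Type*} [Fintype n]
    {X : Matrix n n ℝ} (hX : X.PosSemidef) (i j : n) :
    X i j ≤ √(X i i) * √(X j j) := by
  have hminor := (hX.submatrix ![i, j]).det_nonneg
  have hsymm : X j i = X i j := by simpa using hX.isHermitian.apply i j
  rw [Matrix.det_fin_two] at hminor
  simp only [Matrix.submatrix_apply, Matrix.cons_val_zero, Matrix.cons_val_one, hsymm] at hminor
  rw [← Real.sqrt_mul hX.diag_nonneg]
  exact (le_abs_self _).trans (Real.abs_le_sqrt (by nlinarith))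

theorem Finset.sum_sum_mul_mul_eq_sq {ι R : Type*} [CommSemiring R] (s : Finset ι) (a b : ι → R) :
    ∑ i ∈ s, ∑ j ∈ s, a i * a j * (b i * b j) = (∑ i ∈ s, a i * b i) ^ 2 := by
  rw [sq, sum_mul_sum]
  exact sum_congr rfl fun i _ => sum_congr rfl fun j _ => by ring

theorem fidelity_sdp_general (n : ℕ) (p q : Fin n → ℝ)
    (hq : ∀ i, 0 ≤ q i) :
    IsGreatest
      {v : ℝ | ∃ X : Matrix (Fin n) (Fin n) ℝ, X.PosSemidef ∧
        (∀ i, X i i = q i) ∧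
        v = ∑ i, ∑ j, X i j * (Real.sqrt (p i) * Real.sqrt (p j))}
      ((∑ i, Real.sqrt (p i) * Real.sqrt (q i)) ^ 2) := by
  have hsum_sq : ∑ i, ∑ j, √(q i) * √(q j) * (√(p i) * √(p j)) =
      (∑ i, √(p i) * √(q i)) ^ 2 := by
    rw [sum_sum_mul_mul_eq_sq]
    exact congrArg (· ^ 2) (sum_congr rfl fun i _ => mul_comm _ _)
  constructor
  · refine ⟨Matrix.vecMulVec (fun i => √(q i)) (fun i => √(q i)),
      by simpa using Matrix.posSemidef_vecMulVec_self_star (fun i => √(q i)),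
      fun i => Real.mul_self_sqrt (hq i), ?_⟩
    simpa [Matrix.vecMulVec_apply] using hsum_sq.symm
  · rintro _ ⟨X, hX, hdiag, rfl⟩
    rw [← hsum_sq]
    refine sum_le_sum fun i _ => sum_le_sum fun j _ => ?_
    refine mul_le_mul_of_nonneg_right ?_ (by positivity)
    simpa only [hdiag] using hX.apply_le_sqrt_mul_sqrt i j

/-- For nonnegative vectors `p, q ∈ ℝ₊ⁿ`, the fidelity
`F(p,q) = (∑ i, √(p i) √(q i))²` equals the optimal value of the SDP:
maximize `⟨X, √p √pᵀ⟩` subject to `diag X = q`, `X ⪰ 0`. -/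
theorem fidelity_sdp (n : ℕ) (p q : Fin n → ℝ)
    (hp : ∀ i, 0 ≤ p i) (hq : ∀ i, 0 ≤ q i) :
    IsGreatest
      {v : ℝ | ∃ X : Matrix (Fin n) (Fin n) ℝ, X.PosSemidef ∧
        (∀ i, X i i = q i) ∧
        v = ∑ i, ∑ j, X i j * (Real.sqrt (p i) * Real.sqrt (p j))}
      ((∑ i, Real.sqrt (p i) * Real.sqrt (q i)) ^ 2) :=
  fidelity_sdp_general n p q hq
end

section
/- For any η, τ ≥ 0 and probability vectors p, q ∈ Prob^n, the largest eigenvalue of η √p √p^T + τ √q √q^T is at least (1/2)(1 + √F(p,q))(η + τ). -/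
/-!
Test the Rayleigh quotient of `M = η uuᵀ + τ wwᵀ`, with the unit vectors `u = √p`, `w = √q`,
at `v = u + w`. Writing `s = ⟪u, w⟫ = √F(p,q) ≥ 0`, one has `⟪u, v⟫ = ⟪w, v⟫ = 1 + s`, hence
`⟪v, M v⟫ = (η + τ)(1 + s)²` and `‖v‖² = 2(1 + s)`, so `λ_max ≥ (1 + s)(η + τ) / 2`.
-/

open Matrix
open scoped MatrixOrder ComplexOrder

namespace Matrix.IsHermitian

variable {𝕜 n : Type*} [RCLike 𝕜] [Fintype n] [DecidableEq n] {A : Matrix n n 𝕜}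

theorem le_algebraMap_iSup_eigenvalues (hA : A.IsHermitian) :
    A ≤ algebraMap ℝ (Matrix n n 𝕜) (⨆ k, hA.eigenvalues k) := by
  refine le_algebraMap_of_spectrum_le (fun x hx ↦ ?_) hA
  obtain ⟨i, rfl⟩ := hA.spectrum_real_eq_range_eigenvalues ▸ hx
  exact le_ciSup (Set.finite_range _).bddAbove i

theorem dotProduct_mulVec_le_iSup_eigenvalues (hA : A.IsHermitian) (v : n → 𝕜) :
    star v ⬝ᵥ (A *ᵥ v) ≤ (⨆ k, hA.eigenvalues k : ℝ) * (star v ⬝ᵥ v) := by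
  have := (le_iff.mp hA.le_algebraMap_iSup_eigenvalues).dotProduct_mulVec_nonneg v
  rwa [sub_mulVec, dotProduct_sub, sub_nonneg, Algebra.algebraMap_eq_smul_one, smul_mulVec,
    one_mulVec, dotProduct_smul, RCLike.real_smul_eq_coe_mul] at this

end Matrix.IsHermitian

theorem Matrix.dotProduct_vecMulVec_self_mulVec {n R : Type*} [Fintype n] [CommSemiring R]
    (u v : n → R) : v ⬝ᵥ (vecMulVec u u *ᵥ v) = (u ⬝ᵥ v) ^ 2 := by
  rw [vecMulVec_mulVec, op_smul_eq_smul, dotProduct_smul, dotProduct_comm, smul_eq_mul, sq]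

theorem Real.sqrt_dotProduct_sqrt_self {n : Type*} [Fintype n] {p : n → ℝ}
    (hp : ∀ i, 0 ≤ p i) : (fun i ↦ √(p i)) ⬝ᵥ (fun i ↦ √(p i)) = ∑ i, p i :=
  Finset.sum_congr rfl fun i _ ↦ Real.mul_self_sqrt (hp i)

theorem le_iSup_eigenvalues_of_rank_two {n : Type*} [Fintype n] [DecidableEq n] (η τ : ℝ)
    {u w : n → ℝ} (hu : u ⬝ᵥ u = 1) (hw : w ⬝ᵥ w = 1) (huw : -1 < u ⬝ᵥ w)
    (hM : (η • vecMulVec u u + τ • vecMulVec w w).IsHermitian) :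
    1 / 2 * (1 + u ⬝ᵥ w) * (η + τ) ≤ ⨆ k, hM.eigenvalues k := by
  set s := u ⬝ᵥ w
  have hws : w ⬝ᵥ u = s := dotProduct_comm w u
  have hform : (u + w) ⬝ᵥ ((η • vecMulVec u u + τ • vecMulVec w w) *ᵥ (u + w))
      = (η + τ) * (1 + s) ^ 2 := by
    simp only [add_mulVec, smul_mulVec, dotProduct_add, dotProduct_smul, smul_eq_mul,
      dotProduct_vecMulVec_self_mulVec, hu, hw, hws]
    ring
  have hnorm : (u + w) ⬝ᵥ (u + w) = 2 * (1 + s) := by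
    simp only [add_dotProduct, dotProduct_add, hu, hw, hws]
    ring
  have hray := hM.dotProduct_mulVec_le_iSup_eigenvalues (u + w)
  simp only [star_trivial, RCLike.ofReal_real_eq_id, id, hform, hnorm] at hray
  refine le_of_mul_le_mul_right ?_ (by linarith : 0 < 2 * (1 + s))
  linarith

theorem lambda_max_lower_bound_general (n : ℕ) (η τ : ℝ)
    (p q : Fin n → ℝ)
    (hp : ∀ i, 0 ≤ p i) (hp1 : (∑ i, p i) = 1)
    (hq : ∀ i, 0 ≤ q i) (hq1 : (∑ i, q i) = 1)
    (hM : (η • Matrix.vecMulVec (fun i => Real.sqrt (p i)) (fun i => Real.sqrt (p i))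
          + τ • Matrix.vecMulVec (fun i => Real.sqrt (q i)) (fun i => Real.sqrt (q i))).IsHermitian) :
    (1 / 2) * (1 + Real.sqrt ((∑ i, Real.sqrt (p i) * Real.sqrt (q i)) ^ 2)) * (η + τ)
      ≤ ⨆ k, hM.eigenvalues k := by
  have hs : 0 ≤ ∑ i, √(p i) * √(q i) := Finset.sum_nonneg fun i _ ↦ by positivity
  rw [Real.sqrt_sq hs]
  exact le_iSup_eigenvalues_of_rank_two η τ (hp1 ▸ Real.sqrt_dotProduct_sqrt_self hp)
    (hq1 ▸ Real.sqrt_dotProduct_sqrt_self hq) (lt_of_lt_of_le neg_one_lt_zero hs) hM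

/-- For `η, τ ≥ 0` and probability vectors `p, q`, the largest
eigenvalue of `η √p √pᵀ + τ √q √qᵀ` is at least
`(1/2)(1 + √F(p,q))(η + τ)`. -/
theorem lambda_max_lower_bound (n : ℕ) (η τ : ℝ) (hη : 0 ≤ η) (hτ : 0 ≤ τ)
    (p q : Fin n → ℝ)
    (hp : ∀ i, 0 ≤ p i) (hp1 : (∑ i, p i) = 1)
    (hq : ∀ i, 0 ≤ q i) (hq1 : (∑ i, q i) = 1)
    (hM : (η • Matrix.vecMulVec (fun i => Real.sqrt (p i)) (fun i => Real.sqrt (p i))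
          + τ • Matrix.vecMulVec (fun i => Real.sqrt (q i)) (fun i => Real.sqrt (q i))).IsHermitian) :
    (1 / 2) * (1 + Real.sqrt ((∑ i, Real.sqrt (p i) * Real.sqrt (q i)) ^ 2)) * (η + τ)
      ≤ ⨆ k, hM.eigenvalues k :=
  lambda_max_lower_bound_general n η τ p q hp hp1 hq hq1 hM
end

section
/- Let A be a finite set, p = ∑_{x∈A} p_x e_x ⊗ e_x ∈ Prob^{A×A} a probability vector supported on the diagonal, and σ ∈ S_+^A a density matrix. Then max{ ⟨√p √p^T, ρ⟩ : ρ ∈ S_+^{A×A}, Tr_A(ρ) = σ } ≤ max{ ⟨√p √p^T, ρ⟩ : ρ ∈ S_+^{A×A}, Tr_A(ρ) = Diag(σ) }, and the right-hand maximum equals F(p, q), where q = ∑_{x∈A} σ_{xx} e_x ⊗ e_x, attained at ρ = √q √q^T. -/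
/-!
Entries of a positive semidefinite matrix satisfy `ρ z z' ≤ √(ρ z z) √(ρ z' z')`, so the objective
is at most `(∑ z, √(p z) √(ρ z z))²`. As `p` lives on the diagonal, only the entries
`ρ (x, x) (x, x) ≤ (Tr_A ρ) x x = σ x x` enter, and this is the same under both constraints, giving
the bound `F(p, q)`. The rank-one matrix `√q √qᵀ` has partial trace `Diag(σ)` and attains it.
-/

open Real Finset

/-- Partial trace over the first factor of `A × A`, for real matrices. -/
noncomputable def ptrFst {A : Type*} [Fintype A]
    (ρ : Matrix (A × A) (A × A) ℝ) : Matrix A A ℝ :=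
  Matrix.of fun x y => ∑ a : A, ρ (a, x) (a, y)

open Matrix

namespace Matrix.PosSemidef

variable {n : Type*} {ρ : Matrix n n ℝ}

lemma apply_sq_le_mul (hρ : ρ.PosSemidef) (i j : n) : ρ i j ^ 2 ≤ ρ i i * ρ j j := by
  -- the principal `2 × 2` minor on `{i, j}` has nonnegative determinant
  have hdet := (hρ.submatrix ![i, j]).det_nonneg
  have hsymm : ρ j i = ρ i j := hρ.1.apply i j
  simp only [det_fin_two, submatrix_apply, Matrix.cons_val_zero, Matrix.cons_val_one,
    hsymm] at hdet
  linarith [sq (ρ i j)]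

lemma apply_le_sqrt_mul_sqrt_s8 (hρ : ρ.PosSemidef) (i j : n) :
    ρ i j ≤ √(ρ i i) * √(ρ j j) :=
  calc ρ i j ≤ |ρ i j| := le_abs_self _
    _ ≤ √(ρ i i * ρ j j) := Real.abs_le_sqrt (hρ.apply_sq_le_mul i j)
    _ = √(ρ i i) * √(ρ j j) := Real.sqrt_mul hρ.diag_nonneg _

lemma sum_sum_mul_le_sq [Fintype n] {u : n → ℝ} (hu : 0 ≤ u) (hρ : ρ.PosSemidef) :
    ∑ i, ∑ j, u i * u j * ρ i j ≤ (∑ i, u i * √(ρ i i)) ^ 2 := by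
  rw [sq, sum_mul_sum]
  refine sum_le_sum fun i _ => sum_le_sum fun j _ => ?_
  calc u i * u j * ρ i j ≤ u i * u j * (√(ρ i i) * √(ρ j j)) :=
        mul_le_mul_of_nonneg_left (hρ.apply_le_sqrt_mul_sqrt_s8 i j) (mul_nonneg (hu i) (hu j))
    _ = u i * √(ρ i i) * (u j * √(ρ j j)) := by ring

end Matrix.PosSemidef

section PartialTrace

variable {A : Type*} [Fintype A]

lemma apply_le_ptrFst_apply {ρ : Matrix (A × A) (A × A) ℝ} (hρ : ρ.PosSemidef) (a x : A) :
    ρ (a, x) (a, x) ≤ ptrFst ρ x x :=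
  single_le_sum (fun b _ => hρ.diag_nonneg (i := (b, x))) (mem_univ a)

lemma sum_sum_sqrt_mul_le_sq_of_ptrFst_le {ρ : Matrix (A × A) (A × A) ℝ} (hρ : ρ.PosSemidef)
    {p q : A × A → ℝ} (hp : ∀ z, p z ≠ 0 → z.1 = z.2) (hq : ∀ x, ptrFst ρ x x ≤ q (x, x)) :
    ∑ z, ∑ z', √(p z) * √(p z') * ρ z z' ≤ (∑ z, √(p z) * √(q z)) ^ 2 := by
  refine (hρ.sum_sum_mul_le_sq fun z => Real.sqrt_nonneg (p z)).trans ?_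
  have hsum_nonneg : 0 ≤ ∑ z, √(p z) * √(ρ z z) := sum_nonneg fun z _ => by positivity
  refine pow_le_pow_left₀ hsum_nonneg (sum_le_sum fun z _ => ?_) 2
  rcases eq_or_ne (p z) 0 with hz | hz
  · simp [hz]
  obtain ⟨a, x⟩ := z
  obtain rfl : a = x := hp _ hz
  gcongr
  exact (apply_le_ptrFst_apply hρ a a).trans (hq a)

lemma ptrFst_vecMulVec_self [DecidableEq A] {v : A × A → ℝ} (hv : ∀ z, z.1 ≠ z.2 → v z = 0) :
    ptrFst (vecMulVec v v) = diagonal fun x => v (x, x) ^ 2 := by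
  ext x y
  rw [ptrFst, of_apply, sum_eq_single x]
  · rcases eq_or_ne x y with rfl | hxy
    · simp [vecMulVec_apply, sq]
    · simp [vecMulVec_apply, hxy, hv (x, y) hxy]
  · intro a _ hax
    simp [vecMulVec_apply, hv (a, x) hax]
  · simp

end PartialTrace

lemma sum_sum_mul_vecMulVec_self {n : Type*} [Fintype n] (u v : n → ℝ) :
    ∑ i, ∑ j, u i * u j * vecMulVec v v i j = (∑ i, u i * v i) ^ 2 := by
  rw [sq, sum_mul_sum]
  simp only [vecMulVec_apply]
  exact sum_congr rfl fun i _ => sum_congr rfl fun j _ => by ring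

theorem diag_relaxation_general (A : Type*) [Fintype A] [DecidableEq A]
    (w : A → ℝ)
    (σ : Matrix A A ℝ) (hσ : σ.PosSemidef)
    (p q : A × A → ℝ)
    (hpdef : p = fun z => if z.1 = z.2 then w z.1 else 0)
    (hqdef : q = fun z => if z.1 = z.2 then σ z.1 z.1 else 0) :
    (∀ ρ : Matrix (A × A) (A × A) ℝ, ρ.PosSemidef → ptrFst ρ = σ →
        (∑ z, ∑ z', Real.sqrt (p z) * Real.sqrt (p z') * ρ z z')
          ≤ (∑ z, Real.sqrt (p z) * Real.sqrt (q z)) ^ 2)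
    ∧ IsGreatest
        {v : ℝ | ∃ ρ : Matrix (A × A) (A × A) ℝ, ρ.PosSemidef ∧
          ptrFst ρ = Matrix.diagonal (fun x => σ x x) ∧
          v = ∑ z, ∑ z', Real.sqrt (p z) * Real.sqrt (p z') * ρ z z'}
        ((∑ z, Real.sqrt (p z) * Real.sqrt (q z)) ^ 2)
    ∧ ((Matrix.vecMulVec (fun z => Real.sqrt (q z)) (fun z => Real.sqrt (q z))).PosSemidef
        ∧ ptrFst (Matrix.vecMulVec (fun z => Real.sqrt (q z)) (fun z => Real.sqrt (q z)))
            = Matrix.diagonal (fun x => σ x x)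
        ∧ (∑ z, ∑ z', Real.sqrt (p z) * Real.sqrt (p z')
              * Matrix.vecMulVec (fun z => Real.sqrt (q z)) (fun z => Real.sqrt (q z)) z z')
            = (∑ z, Real.sqrt (p z) * Real.sqrt (q z)) ^ 2) := by
  have hp : ∀ z, p z ≠ 0 → z.1 = z.2 := fun z hz => by
    subst hpdef
    by_contra h
    simp [h] at hz
  have hq : ∀ x, q (x, x) = σ x x := fun x => by simp [hqdef]
  have hsqrt_q : ∀ z, z.1 ≠ z.2 → √(q z) = 0 := fun z hz => by simp [hqdef, hz]
  have hbound : ∀ ρ : Matrix (A × A) (A × A) ℝ, ρ.PosSemidef → (∀ x, ptrFst ρ x x = σ x x) →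
      ∑ z, ∑ z', √(p z) * √(p z') * ρ z z' ≤ (∑ z, √(p z) * √(q z)) ^ 2 :=
    fun ρ hρ hρσ => sum_sum_sqrt_mul_le_sq_of_ptrFst_le hρ hp fun x =>
      ((hρσ x).trans (hq x).symm).le
  have hpsd := posSemidef_vecMulVec_self_star fun z => √(q z)
  rw [star_trivial] at hpsd
  have hptr : ptrFst (vecMulVec (fun z => √(q z)) fun z => √(q z)) = diagonal fun x => σ x x := by
    rw [ptrFst_vecMulVec_self hsqrt_q]
    simp only [hq, sq_sqrt hσ.diag_nonneg]
  have hval := sum_sum_mul_vecMulVec_self (fun z => √(p z)) fun z => √(q z)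
  refine ⟨fun ρ hρ hρσ => hbound ρ hρ fun x => by rw [hρσ], ⟨⟨_, hpsd, hptr, hval.symm⟩, ?_⟩,
    hpsd, hptr, hval⟩
  rintro _ ⟨ρ, hρ, hρσ, rfl⟩
  exact hbound ρ hρ fun x => by simp [hρσ]

/-- For a probability vector `p` supported on the diagonal of
`A × A` and a density matrix `σ`, the SDP value with constraint `Tr_A ρ = σ`
is at most the one with constraint `Tr_A ρ = Diag(σ)`, and the latter equals
`F(p,q)` (with `q` the diagonal of `σ`, placed on the diagonal of `A × A`),
attained at `ρ = √q √qᵀ`. -/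
theorem diag_relaxation (A : Type*) [Fintype A] [DecidableEq A]
    (w : A → ℝ) (hw : ∀ x, 0 ≤ w x) (hw1 : (∑ x, w x) = 1)
    (σ : Matrix A A ℝ) (hσ : σ.PosSemidef) (hσ1 : σ.trace = 1)
    (p q : A × A → ℝ)
    (hpdef : p = fun z => if z.1 = z.2 then w z.1 else 0)
    (hqdef : q = fun z => if z.1 = z.2 then σ z.1 z.1 else 0) :
    (∀ ρ : Matrix (A × A) (A × A) ℝ, ρ.PosSemidef → ptrFst ρ = σ →
        (∑ z, ∑ z', Real.sqrt (p z) * Real.sqrt (p z') * ρ z z')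
          ≤ (∑ z, Real.sqrt (p z) * Real.sqrt (q z)) ^ 2)
    ∧ IsGreatest
        {v : ℝ | ∃ ρ : Matrix (A × A) (A × A) ℝ, ρ.PosSemidef ∧
          ptrFst ρ = Matrix.diagonal (fun x => σ x x) ∧
          v = ∑ z, ∑ z', Real.sqrt (p z) * Real.sqrt (p z') * ρ z z'}
        ((∑ z, Real.sqrt (p z) * Real.sqrt (q z)) ^ 2)
    ∧ ((Matrix.vecMulVec (fun z => Real.sqrt (q z)) (fun z => Real.sqrt (q z))).PosSemidef
        ∧ ptrFst (Matrix.vecMulVec (fun z => Real.sqrt (q z)) (fun z => Real.sqrt (q z)))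
            = Matrix.diagonal (fun x => σ x x)
        ∧ (∑ z, ∑ z', Real.sqrt (p z) * Real.sqrt (p z')
              * Matrix.vecMulVec (fun z => Real.sqrt (q z)) (fun z => Real.sqrt (q z)) z z')
            = (∑ z, Real.sqrt (p z) * Real.sqrt (q z)) ^ 2) :=
  diag_relaxation_general A w σ hσ p q hpdef hqdef
end

section
/- For any ρ ∈ S_+^{A×A} with Tr_A(ρ) = σ and any probability vector p supported on the diagonal of A×A (i.e. p = ∑_x p_x e_x⊗e_x), it holds that ⟨√p √p^T, ρ⟩ ≤ F(p, q), where q_x = σ_{xx}. In particular, the inner product with a purification-type target is bounded by the fidelity with the diagonal of the reduced state. -/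
/-! Writing the diagonally supported `√p` in coordinates, the left-hand side is
`∑ x y, √(w x) √(w y) ρ (x,x) (y,y)`. Each entry `ρ (x,x) (y,y)` is at most
`√(ρ (x,x) (x,x)) √(ρ (y,y) (y,y))` by the `2 × 2` principal minor of `ρ`, and dropping the
other nonnegative diagonal entries of `ρ` from the partial trace gives
`ρ (x,x) (x,x) ≤ σ x x`. Hence the double sum is bounded by `(∑ x, √(w x) √(σ x x))²`. -/

open Real Finset

namespace Matrix

theorem PosSemidef.apply_sq_le_mul_s9 {n : Type*} [Fintype n] {ρ : Matrix n n ℝ}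
    (hρ : ρ.PosSemidef) (i j : n) : ρ i j ^ 2 ≤ ρ i i * ρ j j := by
  have hminor := (hρ.submatrix ![i, j]).det_nonneg
  have hsymm : ρ j i = ρ i j := hρ.isHermitian.apply i j
  simp only [det_fin_two, submatrix_apply, Matrix.cons_val_zero, Matrix.cons_val_one] at hminor
  rw [hsymm, ← sq] at hminor
  linarith

theorem PosSemidef.apply_le_sqrt_mul_sqrt_s9 {n : Type*} [Fintype n] {ρ : Matrix n n ℝ}
    (hρ : ρ.PosSemidef) (i j : n) : ρ i j ≤ √(ρ i i) * √(ρ j j) := by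
  rw [← Real.sqrt_mul hρ.diag_nonneg]
  exact (le_abs_self _).trans (Real.abs_le_sqrt (hρ.apply_sq_le_mul_s9 i j))

theorem PosSemidef.apply_le_sum_apply {A B R : Type*} [Fintype A] [Ring R] [PartialOrder R]
    [StarRing R] [IsOrderedAddMonoid R] {ρ : Matrix (A × B) (A × B) R} (hρ : ρ.PosSemidef)
    (a : A) (x : B) : ρ (a, x) (a, x) ≤ ∑ b, ρ (b, x) (b, x) :=
  single_le_sum (f := fun b => ρ (b, x) (b, x)) (fun _ _ => hρ.diag_nonneg) (mem_univ a)

end Matrix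

theorem Fintype.sum_prod_eq_sum_diag {A M : Type*} [Fintype A] [AddCommMonoid M]
    {F : A × A → M} (hF : ∀ z : A × A, z.1 ≠ z.2 → F z = 0) : ∑ z, F z = ∑ x, F (x, x) := by
  rw [Fintype.sum_prod_type]
  exact Finset.sum_congr rfl fun x _ => Fintype.sum_eq_single x fun y hyx => hF (x, y) hyx.symm

theorem sum_sum_mul_le_sq_sum_mul {ι : Type*} (s : Finset ι) {c f : ι → ℝ} {M : ι → ι → ℝ}
    (hc : ∀ i, 0 ≤ c i) (hM : ∀ i j, M i j ≤ f i * f j) :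
    ∑ i ∈ s, ∑ j ∈ s, c i * c j * M i j ≤ (∑ i ∈ s, c i * f i) ^ 2 := by
  rw [sq, sum_mul_sum]
  refine sum_le_sum fun i _ => sum_le_sum fun j _ => ?_
  calc c i * c j * M i j ≤ c i * c j * (f i * f j) :=
        mul_le_mul_of_nonneg_left (hM i j) (mul_nonneg (hc i) (hc j))
    _ = c i * f i * (c j * f j) := by ring

theorem inner_le_fidelity_diag_general (A : Type*) [Fintype A] [DecidableEq A]
    (w : A → ℝ)
    (p : A × A → ℝ) (hpdef : p = fun z => if z.1 = z.2 then w z.1 else 0)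
    (ρ : Matrix (A × A) (A × A) ℝ) (hρ : ρ.PosSemidef)
    (σ : Matrix A A ℝ)
    (hσ : (Matrix.of fun x y => ∑ a : A, ρ (a, x) (a, y)) = σ) :
    (∑ z, ∑ z', Real.sqrt (p z) * Real.sqrt (p z') * ρ z z')
      ≤ (∑ x, Real.sqrt (w x) * Real.sqrt (σ x x)) ^ 2 := by
  subst hσ
  have hoff : ∀ z : A × A, z.1 ≠ z.2 → √(p z) = 0 := fun z hz => by simp [hpdef, hz]
  have hon : ∀ x : A, √(p (x, x)) = √(w x) := fun x => by simp [hpdef]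
  have hentry : ∀ x y : A, ρ (x, x) (y, y) ≤ √(∑ a, ρ (a, x) (a, x)) * √(∑ a, ρ (a, y) (a, y)) :=
    fun x y => (hρ.apply_le_sqrt_mul_sqrt_s9 _ _).trans <|
      mul_le_mul (sqrt_le_sqrt (hρ.apply_le_sum_apply x x))
        (sqrt_le_sqrt (hρ.apply_le_sum_apply y y)) (sqrt_nonneg _) (sqrt_nonneg _)
  calc ∑ z, ∑ z', √(p z) * √(p z') * ρ z z'
      = ∑ x, ∑ y, √(w x) * √(w y) * ρ (x, x) (y, y) := by
        rw [Fintype.sum_prod_eq_sum_diag fun z hz => by simp [hoff z hz]]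
        refine sum_congr rfl fun x _ => ?_
        rw [Fintype.sum_prod_eq_sum_diag fun z hz => by simp [hoff z hz], hon]
        simp only [hon]
    _ ≤ _ := sum_sum_mul_le_sq_sum_mul _ (fun x => sqrt_nonneg _) hentry

/-- For `ρ ⪰ 0` on `ℂ^(A×A)`-analogue (real case) with partial
trace `σ` over the first factor, and a probability vector `p` supported on the
diagonal of `A × A`, the inner product `⟨√p √pᵀ, ρ⟩` is at most `F(p, q)` where
`q x = σ x x` is the diagonal of the reduced state. -/
theorem inner_le_fidelity_diag (A : Type*) [Fintype A] [DecidableEq A]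
    (w : A → ℝ) (hw : ∀ x, 0 ≤ w x) (hw1 : (∑ x, w x) = 1)
    (p : A × A → ℝ) (hpdef : p = fun z => if z.1 = z.2 then w z.1 else 0)
    (ρ : Matrix (A × A) (A × A) ℝ) (hρ : ρ.PosSemidef)
    (σ : Matrix A A ℝ)
    (hσ : (Matrix.of fun x y => ∑ a : A, ρ (a, x) (a, y)) = σ) :
    (∑ z, ∑ z', Real.sqrt (p z) * Real.sqrt (p z') * ρ z z')
      ≤ (∑ x, Real.sqrt (w x) * Real.sqrt (σ x x)) ^ 2 :=
  inner_le_fidelity_diag_general A w p hpdef ρ hρ σ hσ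
end

section
/- For any integer N ≥ 1 and any probability vector γ ∈ Prob^D, there exists a probability vector γ′ ∈ Prob^D all of whose entries are integer multiples of 1/N such that the unit vectors ξ = ∑_i √(γ_i) e_i and ξ′ = ∑_i √(γ′_i) e_i satisfy ξ·ξ′ ≥ 1 − D/(2N). -/
/-!
Round each `N γ i` down and hand the missing units, at most one per coordinate, to some of the
coordinates: this gives a mesh point within `1/N` of `γ` in every coordinate, hence within `D/N`
in `ℓ¹`. The Fuchs–van de Graaf bound `∑ √(γ i) √(γ' i) ≥ 1 - ‖γ - γ'‖₁ / 2` then follows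
termwise from `√a √b ≥ min a b = (a + b - |a - b|) / 2`.
-/

open Real Finset

theorem min_le_sqrt_mul_sqrt (a b : ℝ) : min a b ≤ √a * √b := by
  wlog hab : a ≤ b generalizing a b
  · rw [min_comm, mul_comm]
    exact this b a (le_of_not_ge hab)
  rw [min_eq_left hab]
  rcases le_or_gt a 0 with ha | ha
  · exact ha.trans (by positivity)
  · calc a = √a * √a := (mul_self_sqrt ha.le).symm
      _ ≤ √a * √b := by gcongr

theorem one_sub_half_sum_abs_sub_le_sum_sqrt_mul_sqrt {ι : Type*} [Fintype ι] {p q : ι → ℝ}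
    (hp : ∑ i, p i = 1) (hq : ∑ i, q i = 1) :
    1 - (∑ i, |p i - q i|) / 2 ≤ ∑ i, √(p i) * √(q i) := by
  have hmin : ∀ i, min (p i) (q i) = (p i + q i - |p i - q i|) / 2 := fun i => by
    linarith [min_add_max (p i) (q i), max_sub_min_eq_abs' (p i) (q i)]
  calc 1 - (∑ i, |p i - q i|) / 2 = ∑ i, min (p i) (q i) := by
        simp only [hmin, ← sum_div, sum_sub_distrib, sum_add_distrib, hp, hq]
        ring
    _ ≤ ∑ i, √(p i) * √(q i) := sum_le_sum fun i _ => min_le_sqrt_mul_sqrt _ _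

theorem exists_nat_sum_eq_abs_sub_le_one {ι : Type*} [Fintype ι] {x : ι → ℝ}
    (hx : ∀ i, 0 ≤ x i) {n : ℕ} (hsum : ∑ i, x i = n) :
    ∃ k : ι → ℕ, ∑ i, k i = n ∧ ∀ i, |x i - k i| ≤ 1 := by
  classical
  set S := ∑ i, ⌊x i⌋₊
  have hS_le : S ≤ n := by
    have : (S : ℝ) ≤ n := by
      rw [← hsum]; push_cast [S]
      exact sum_le_sum fun i _ => Nat.floor_le (hx i)
    exact_mod_cast this
  have hn_le : n ≤ S + Fintype.card ι := by
    have : (n : ℝ) ≤ S + Fintype.card ι :=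
      calc (n : ℝ) = ∑ i, x i := hsum.symm
        _ ≤ ∑ i, ((⌊x i⌋₊ : ℝ) + 1) := sum_le_sum fun i _ => (Nat.lt_floor_add_one (x i)).le
        _ = S + Fintype.card ι := by simp [S, sum_add_distrib]
    exact_mod_cast this
  obtain ⟨t, -, ht⟩ := exists_subset_card_eq (s := (univ : Finset ι)) (n := n - S) (by rw [card_univ]; omega)
  refine ⟨fun i => ⌊x i⌋₊ + if i ∈ t then 1 else 0, ?_, fun i => ?_⟩
  · rw [sum_add_distrib, sum_ite_mem, univ_inter, sum_const, smul_eq_mul, mul_one, ht]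
    omega
  · have hlo := Nat.floor_le (hx i)
    have hhi := Nat.lt_floor_add_one (x i)
    rw [abs_le]
    dsimp only
    split_ifs <;> push_cast <;> constructor <;> linarith

theorem exists_nat_div_sum_eq_one_sum_abs_sub_le {ι : Type*} [Fintype ι] {N : ℕ} (hN : 1 ≤ N)
    {γ : ι → ℝ} (hγ : ∀ i, 0 ≤ γ i) (hγ1 : ∑ i, γ i = 1) :
    ∃ k : ι → ℕ, ∑ i, (k i : ℝ) / N = 1 ∧
      ∑ i, |γ i - k i / N| ≤ Fintype.card ι / N := by
  have hN0 : (0 : ℝ) < N := by exact_mod_cast hN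
  obtain ⟨k, hk, hdist⟩ := exists_nat_sum_eq_abs_sub_le_one (x := fun i => N * γ i)
    (fun i => mul_nonneg hN0.le (hγ i)) (by rw [← mul_sum, hγ1, mul_one])
  refine ⟨k, ?_, ?_⟩
  · rw [← sum_div, div_eq_one_iff_eq hN0.ne']
    exact_mod_cast hk
  · calc ∑ i, |γ i - k i / N| = ∑ i, |N * γ i - k i| / N := by
          refine sum_congr rfl fun i _ => ?_
          rw [← abs_of_pos hN0, ← abs_div, abs_of_pos hN0]
          field_simp
      _ ≤ ∑ _i : ι, 1 / (N : ℝ) := sum_le_sum fun i _ => by gcongr; exact hdist i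
      _ = Fintype.card ι / N := by rw [sum_const, card_univ, nsmul_eq_mul, mul_one_div]

/-- For any `N ≥ 1` and probability vector `γ ∈ Prob^D`, there is
a probability vector `γ'` whose entries are integer multiples of `1/N` such
that `∑ i, √(γ i) √(γ' i) ≥ 1 − D/(2N)`. -/
theorem mesh_approximation (D N : ℕ) (hN : 1 ≤ N)
    (γ : Fin D → ℝ) (hγ : ∀ i, 0 ≤ γ i) (hγ1 : (∑ i, γ i) = 1) :
    ∃ γ' : Fin D → ℝ, (∀ i, 0 ≤ γ' i) ∧ (∑ i, γ' i) = 1 ∧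
      (∀ i, ∃ k : ℕ, γ' i = (k : ℝ) / N) ∧
      1 - (D : ℝ) / (2 * N) ≤ ∑ i, Real.sqrt (γ i) * Real.sqrt (γ' i) := by
  obtain ⟨k, hk1, hdist⟩ := exists_nat_div_sum_eq_one_sum_abs_sub_le hN hγ hγ1
  rw [Fintype.card_fin] at hdist
  refine ⟨fun i => k i / N, fun i => by positivity, hk1, fun i => ⟨k i, rfl⟩, ?_⟩
  calc 1 - (D : ℝ) / (2 * N) ≤ 1 - (∑ i, |γ i - k i / N|) / 2 := by
        rw [mul_comm, ← div_div]; linarith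
    _ ≤ _ := one_sub_half_sum_abs_sub_le_sum_sqrt_mul_sqrt hγ1 hk1
end

section
/- For probability vectors p, q ∈ Prob² on a 2-element set, 1 ≤ Δ(p,q) + F(p,q), where F(p,q) = (√(p₁q₁)+√(p₂q₂))² and Δ(p,q) = (1/2)(|p₁−q₁|+|p₂−q₂|). -/
/-!
Write `p = (x², u²)` and `q = (y², v²)` with `x, u, y, v ≥ 0`. Lagrange's identity gives
`1 - F = (x v - u y)²`, while `Δ = |x² v² - u² y²| = |x v - u y| (x v + u y)`; since
`|x v - u y| ≤ x v + u y`, the defect `1 - F` is at most `Δ`.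
-/

open Real

lemma sq_le_abs_mul_of_abs_le {d s : ℝ} (h : |d| ≤ s) : d ^ 2 ≤ |d| * s := by
  rw [← sq_abs, sq]
  exact mul_le_mul_of_nonneg_left h (abs_nonneg d)

lemma mul_le_abs_sub_add_sq_sqrt_mul_add {a b c d : ℝ}
    (ha : 0 ≤ a) (hb : 0 ≤ b) (hc : 0 ≤ c) (hd : 0 ≤ d) :
    (a + c) * (b + d) ≤ |a * d - c * b| + (√a * √b + √c * √d) ^ 2 := by
  obtain ⟨x, hx, rfl⟩ : ∃ x, 0 ≤ x ∧ x ^ 2 = a := ⟨√a, sqrt_nonneg a, sq_sqrt ha⟩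
  obtain ⟨y, hy, rfl⟩ : ∃ y, 0 ≤ y ∧ y ^ 2 = b := ⟨√b, sqrt_nonneg b, sq_sqrt hb⟩
  obtain ⟨u, hu, rfl⟩ : ∃ u, 0 ≤ u ∧ u ^ 2 = c := ⟨√c, sqrt_nonneg c, sq_sqrt hc⟩
  obtain ⟨v, hv, rfl⟩ : ∃ v, 0 ≤ v ∧ v ^ 2 = d := ⟨√d, sqrt_nonneg d, sq_sqrt hd⟩
  simp only [sqrt_sq hx, sqrt_sq hy, sqrt_sq hu, sqrt_sq hv]
  have lagrange : (x ^ 2 + u ^ 2) * (y ^ 2 + v ^ 2) = (x * y + u * v) ^ 2 + (x * v - u * y) ^ 2 := by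
    ring
  have cross : x ^ 2 * v ^ 2 - u ^ 2 * y ^ 2 = (x * v - u * y) * (x * v + u * y) := by ring
  have defect : (x * v - u * y) ^ 2 ≤ |x * v - u * y| * (x * v + u * y) :=
    sq_le_abs_mul_of_abs_le (abs_sub_le_of_nonneg_of_le (mul_nonneg hx hv)
      (le_add_of_nonneg_right (by positivity)) (mul_nonneg hu hy)
      (le_add_of_nonneg_left (by positivity)))
  rw [lagrange, cross, abs_mul, abs_of_nonneg (by positivity : 0 ≤ x * v + u * y)]
  linarith

/-- Strengthened Fuchs–van de Graaf inequality in dimension 2: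
for probability vectors `p, q` on a 2-element set, `1 ≤ Δ(p,q) + F(p,q)`. -/
theorem fuchs_van_de_graaf_qubit (p q : Fin 2 → ℝ)
    (hp : ∀ i, 0 ≤ p i) (hp1 : (∑ i, p i) = 1)
    (hq : ∀ i, 0 ≤ q i) (hq1 : (∑ i, q i) = 1) :
    1 ≤ (1 / 2) * (∑ i, |p i - q i|)
        + (∑ i, Real.sqrt (p i) * Real.sqrt (q i)) ^ 2 := by
  simp only [Fin.sum_univ_two] at hp1 hq1 ⊢
  have key := mul_le_abs_sub_add_sq_sqrt_mul_add (hp 0) (hq 0) (hp 1) (hq 1)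
  have hp_one : p 1 = 1 - p 0 := by linarith
  have hq_one : q 1 = 1 - q 0 := by linarith
  have trace_distance : (1 / 2) * (|p 0 - q 0| + |p 1 - q 1|) = |p 0 * q 1 - p 1 * q 0| := by
    rw [hp_one, hq_one, show 1 - p 0 - (1 - q 0) = -(p 0 - q 0) by ring, abs_neg]
    ring_nf
  rw [hp1, hq1, one_mul] at key
  rw [trace_distance]
  exact key
end

section
/- Suppose real numbers P_A, P_B ∈ [1/2, 1] satisfy: (i) there exist probability vectors β₀, β₁ ∈ Prob² with P_B ≥ 1/2 + (1/2)√F(β₀,β₁), (ii) there exist probability vectors α₀, α₁ ∈ Prob² with P_B ≥ 1/2 + (1/2)Δ(α₀,α₁), and (iii) P_A ≥ (1/2 + (1/2)√F(α₀,α₁))(1/2 + (1/2)Δ(β₀,β₁)). Then 4 P_A ≥ (1 + √(2 − 2 P_B)) (1 + 4 P_B (1 − P_B)), and consequently max{P_A, P_B} ≥ 0.7487. -/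
/-!
In dimension two the classical fidelity and the total variation distance satisfy the strengthened
Fuchs–van de Graaf inequality `F + Δ ≥ 1`. Applied to `β` it turns the bound `√F(β₀,β₁) ≤ 2 P_B - 1`
into `Δ(β₀,β₁) ≥ 4 P_B (1 - P_B)`; applied to `α` it turns `Δ(α₀,α₁) ≤ 2 P_B - 1` into
`√F(α₀,α₁) ≥ √(2 - 2 P_B)`. Substituting both into the bound on `P_A` gives the first claim, and the
right-hand side is decreasing in `P_B`, so `P_B < 0.7487` forces `P_A ≥ 0.7487`.
-/

open Real Finset

section

variable {ι : Type*} [Fintype ι]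

noncomputable def fidelity (p q : ι → ℝ) : ℝ := (∑ i, √(p i) * √(q i)) ^ 2

noncomputable def tvDist (p q : ι → ℝ) : ℝ := (1 / 2) * ∑ i, |p i - q i|

end

theorem one_le_sqrt_mul_add_sqrt_mul_sq_add_abs_sub {a b : ℝ} (ha₀ : 0 ≤ a) (ha₁ : a ≤ 1)
    (hb₀ : 0 ≤ b) (hb₁ : b ≤ 1) :
    1 ≤ (√a * √b + √(1 - a) * √(1 - b)) ^ 2 + |a - b| := by
  wlog hba : b ≤ a generalizing a b
  · have := this hb₀ hb₁ ha₀ ha₁ (by linarith)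
    rwa [abs_sub_comm, mul_comm √b, mul_comm √(1 - b)] at this
  rw [abs_of_nonneg (sub_nonneg.2 hba)]
  have hcross : √b * √(1 - a) ≤ √a * √(1 - b) :=
    mul_le_mul (sqrt_le_sqrt hba) (sqrt_le_sqrt (by linarith)) (sqrt_nonneg _) (sqrt_nonneg _)
  have hexpand : (√a * √b + √(1 - a) * √(1 - b)) ^ 2 + (a - b) - 1
      = 2 * (√b * √(1 - a)) * (√a * √(1 - b) - √b * √(1 - a)) := by
    linear_combination √b ^ 2 * sq_sqrt ha₀ + (a + 2 * (1 - a)) * sq_sqrt hb₀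
      + (√(1 - b) ^ 2 + 2 * √b ^ 2) * sq_sqrt (sub_nonneg.2 ha₁)
      + (1 - a) * sq_sqrt (sub_nonneg.2 hb₁)
  linarith [mul_nonneg (by positivity : 0 ≤ 2 * (√b * √(1 - a))) (sub_nonneg.2 hcross)]

theorem one_le_fidelity_add_tvDist {p q : Fin 2 → ℝ} (hp : p ∈ stdSimplex ℝ (Fin 2))
    (hq : q ∈ stdSimplex ℝ (Fin 2)) : 1 ≤ fidelity p q + tvDist p q := by
  have hp₁ : p 1 = 1 - p 0 := by linarith [hp.2, Fin.sum_univ_two p]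
  have hq₁ : q 1 = 1 - q 0 := by linarith [hq.2, Fin.sum_univ_two q]
  obtain ⟨hp₀, hp₀'⟩ := mem_Icc_of_mem_stdSimplex hp 0
  obtain ⟨hq₀, hq₀'⟩ := mem_Icc_of_mem_stdSimplex hq 0
  have := one_le_sqrt_mul_add_sqrt_mul_sq_add_abs_sub hp₀ hp₀' hq₀ hq₀'
  rw [fidelity, tvDist, Fin.sum_univ_two, Fin.sum_univ_two, hp₁, hq₁,
    show 1 - p 0 - (1 - q 0) = -(p 0 - q 0) by ring, abs_neg]
  linarith

section TwoPoint

variable {p q : Fin 2 → ℝ} {P : ℝ}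

theorem four_mul_mul_one_sub_le_tvDist (hp : p ∈ stdSimplex ℝ (Fin 2))
    (hq : q ∈ stdSimplex ℝ (Fin 2)) (h : 1 / 2 + 1 / 2 * √(fidelity p q) ≤ P) :
    4 * P * (1 - P) ≤ tvDist p q := by
  have hF : fidelity p q ≤ (2 * P - 1) ^ 2 :=
    calc fidelity p q = √(fidelity p q) ^ 2 := (sq_sqrt (sq_nonneg _)).symm
      _ ≤ (2 * P - 1) ^ 2 := pow_le_pow_left₀ (sqrt_nonneg _) (by linarith) 2
  linarith [one_le_fidelity_add_tvDist hp hq]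

theorem sqrt_two_sub_two_mul_le_sqrt_fidelity (hp : p ∈ stdSimplex ℝ (Fin 2))
    (hq : q ∈ stdSimplex ℝ (Fin 2)) (h : 1 / 2 + 1 / 2 * tvDist p q ≤ P) :
    √(2 - 2 * P) ≤ √(fidelity p q) :=
  sqrt_le_sqrt (by linarith [one_le_fidelity_add_tvDist hp hq])

end TwoPoint

-- `0.70894` and `0.75259324` are the values of the two decreasing factors at `x = 0.7487`,
-- rounded down.
theorem le_one_add_sqrt_two_sub_two_mul_mul_one_add {x : ℝ} (hx₀ : 1 / 2 ≤ x) (hx₁ : x ≤ 0.7487) :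
    4 * 0.7487 ≤ (1 + √(2 - 2 * x)) * (1 + 4 * x * (1 - x)) := by
  have hs : 0.70894 ≤ √(2 - 2 * x) := le_sqrt_of_sq_le (by linarith)
  have ht : 0.75259324 ≤ 4 * x * (1 - x) := by nlinarith
  nlinarith [mul_le_mul hs ht (by norm_num) (sqrt_nonneg _)]

theorem four_round_qubit_bound_general (PA PB : ℝ)
    (hPB : PB ∈ Set.Icc (1 / 2 : ℝ) 1)
    (β₀ β₁ α₀ α₁ : Fin 2 → ℝ)
    (hβ₀ : ∀ i, 0 ≤ β₀ i) (hβ₀1 : (∑ i, β₀ i) = 1)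
    (hβ₁ : ∀ i, 0 ≤ β₁ i) (hβ₁1 : (∑ i, β₁ i) = 1)
    (hα₀ : ∀ i, 0 ≤ α₀ i) (hα₀1 : (∑ i, α₀ i) = 1)
    (hα₁ : ∀ i, 0 ≤ α₁ i) (hα₁1 : (∑ i, α₁ i) = 1)
    (h1 : 1 / 2 + (1 / 2) * Real.sqrt ((∑ i, Real.sqrt (β₀ i) * Real.sqrt (β₁ i)) ^ 2) ≤ PB)
    (h2 : 1 / 2 + (1 / 2) * ((1 / 2) * ∑ i, |α₀ i - α₁ i|) ≤ PB)
    (h3 : (1 / 2 + (1 / 2) * Real.sqrt ((∑ i, Real.sqrt (α₀ i) * Real.sqrt (α₁ i)) ^ 2))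
            * (1 / 2 + (1 / 2) * ((1 / 2) * ∑ i, |β₀ i - β₁ i|)) ≤ PA) :
    (1 + Real.sqrt (2 - 2 * PB)) * (1 + 4 * PB * (1 - PB)) ≤ 4 * PA
    ∧ (0.7487 : ℝ) ≤ max PA PB := by
  have hΔβ : 4 * PB * (1 - PB) ≤ tvDist β₀ β₁ :=
    four_mul_mul_one_sub_le_tvDist ⟨hβ₀, hβ₀1⟩ ⟨hβ₁, hβ₁1⟩ h1
  have hFα : √(2 - 2 * PB) ≤ √(fidelity α₀ α₁) :=
    sqrt_two_sub_two_mul_le_sqrt_fidelity ⟨hα₀, hα₀1⟩ ⟨hα₁, hα₁1⟩ h2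
  have h3' : (1 / 2 + 1 / 2 * √(fidelity α₀ α₁)) * (1 / 2 + 1 / 2 * tvDist β₀ β₁) ≤ PA := h3
  have hPA : (1 + √(2 - 2 * PB)) * (1 + 4 * PB * (1 - PB)) ≤ 4 * PA :=
    calc _ ≤ (1 + √(fidelity α₀ α₁)) * (1 + tvDist β₀ β₁) :=
          mul_le_mul (by linarith) (by linarith) (by nlinarith [hPB.1, hPB.2])
            (by positivity)
      _ ≤ 4 * PA := by linear_combination 4 * h3'
  refine ⟨hPA, ?_⟩
  rcases le_total 0.7487 PB with hPB' | hPB'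
  · exact le_max_of_le_right hPB'
  · have := le_one_add_sqrt_two_sub_two_mul_mul_one_add hPB.1 hPB'
    exact le_max_of_le_left (by linarith)

/-- Lower bound for four-round qubit protocols. If
`P_A, P_B ∈ [1/2, 1]` satisfy the three cheating-probability lower bounds with
two-dimensional probability vectors `α₀, α₁, β₀, β₁`, then
`4 P_A ≥ (1 + √(2 − 2 P_B))(1 + 4 P_B (1 − P_B))`, and consequently
`max{P_A, P_B} ≥ 0.7487`. -/
theorem four_round_qubit_bound (PA PB : ℝ)
    (hPA : PA ∈ Set.Icc (1 / 2 : ℝ) 1) (hPB : PB ∈ Set.Icc (1 / 2 : ℝ) 1)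
    (β₀ β₁ α₀ α₁ : Fin 2 → ℝ)
    (hβ₀ : ∀ i, 0 ≤ β₀ i) (hβ₀1 : (∑ i, β₀ i) = 1)
    (hβ₁ : ∀ i, 0 ≤ β₁ i) (hβ₁1 : (∑ i, β₁ i) = 1)
    (hα₀ : ∀ i, 0 ≤ α₀ i) (hα₀1 : (∑ i, α₀ i) = 1)
    (hα₁ : ∀ i, 0 ≤ α₁ i) (hα₁1 : (∑ i, α₁ i) = 1)
    (h1 : 1 / 2 + (1 / 2) * Real.sqrt ((∑ i, Real.sqrt (β₀ i) * Real.sqrt (β₁ i)) ^ 2) ≤ PB)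
    (h2 : 1 / 2 + (1 / 2) * ((1 / 2) * ∑ i, |α₀ i - α₁ i|) ≤ PB)
    (h3 : (1 / 2 + (1 / 2) * Real.sqrt ((∑ i, Real.sqrt (α₀ i) * Real.sqrt (α₁ i)) ^ 2))
            * (1 / 2 + (1 / 2) * ((1 / 2) * ∑ i, |β₀ i - β₁ i|)) ≤ PA) :
    (1 + Real.sqrt (2 - 2 * PB)) * (1 + 4 * PB * (1 - PB)) ≤ 4 * PA
    ∧ (0.7487 : ℝ) ≤ max PA PB :=
  four_round_qubit_bound_general PA PB hPB β₀ β₁ α₀ α₁ hβ₀ hβ₀1 hβ₁ hβ₁1 hα₀ hα₀1 hα₁ hα₁1 h1 h2 h3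
end
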